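/- Every infinite hyperbolic group contains an element of infinite order. -/

import Mathlib

/-!
Slim triangles give Gromov's four-point condition
`(x|z)_p ≥ min ((x|y)_p, (y|z)_p) - O(δ)`. An infinite finitely generated group has arbitrarily
long geodesic words, and by pigeonhole a long geodesic word contains two distant windows of length
`≈ 3δ` carrying the same letters. This yields an element `s`, with `|s| ≫ δ`, whose geodesic word
`u` can be followed by a copy of its own initial segment of length `≈ 3δ` and stay geodesic.
The four-point condition forces `(s⁻¹|s)_1 = O(δ)`, and applied along `1, s, s², …` it gives
`|s^(j+1)| ≥ |s^j| + |s| - O(δ)`, so no positive power of `s` is trivial.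
-/

/-- The element of the group `G` represented by the word `w` over the
generating set, where `σ` maps generators to group elements. -/
def evalW {α : Type*} {G : Type*} [Group G] (σ : α → G) (w : List α) : G :=
  (w.map σ).prod

/-- The word length of a group element: the smallest length of a word over the
generators representing it. -/
noncomputable def wlen {α : Type*} {G : Type*} [Group G] (σ : α → G) (g : G) : ℕ :=
  sInf {n | ∃ w : List α, evalW σ w = g ∧ w.length = n}

/-- The word metric on the Cayley graph of `G` with respect to `σ`. -/
noncomputable def gdist {α : Type*} {G : Type*} [Group G] (σ : α → G) (g h : G) : ℕ :=
  wlen σ (g⁻¹ * h)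

/-- `σ` lists a generating set of `G`: every element is represented by a word. -/
def Generates {α : Type*} {G : Type*} [Group G] (σ : α → G) : Prop :=
  ∀ g : G, ∃ w : List α, evalW σ w = g

/-- The generating set is symmetric: it is closed under inversion. -/
def SymmetricGens {α : Type*} {G : Type*} [Group G] (σ : α → G) : Prop :=
  ∀ a : α, ∃ b : α, σ b = (σ a)⁻¹

/-- A word is geodesic if it labels a geodesic path in the Cayley graph,
i.e. its length equals the word length of the element it represents. -/
def IsGeodesicWord {α : Type*} {G : Type*} [Group G] (σ : α → G) (w : List α) : Prop :=
  wlen σ (evalW σ w) = w.length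

/-- The Cayley graph of `G` (w.r.t. `σ`) is `δ`-hyperbolic: every geodesic
triangle is `δ`-slim.  A triangle is encoded by geodesic words `x, y, z` with
`eval x · eval y · eval z = 1`; the side labelled `x` starts at `1`, the side
labelled `y` starts at `eval x`, the side labelled `z` starts at `eval x · eval y`.
Slimness: every point on the first side is within distance `δ` of the union of
the other two sides (by symmetry of the quantification this applies to each side). -/
def DeltaHyperbolic {α : Type*} {G : Type*} [Group G] (σ : α → G) (δ : ℕ) : Prop :=
  ∀ x y z : List α, IsGeodesicWord σ x → IsGeodesicWord σ y → IsGeodesicWord σ z →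
    evalW σ x * evalW σ y * evalW σ z = 1 →
    ∀ i ≤ x.length, ∃ j : ℕ,
      (j ≤ y.length ∧
        gdist σ (evalW σ (x.take i)) (evalW σ x * evalW σ (y.take j)) ≤ δ) ∨
      (j ≤ z.length ∧
        gdist σ (evalW σ (x.take i)) (evalW σ x * evalW σ y * evalW σ (z.take j)) ≤ δ)

section WordMetric

variable {α G : Type*} [Group G] (σ : α → G)

@[simp]
lemma evalW_nil : evalW σ [] = 1 := rfl

@[simp]
lemma evalW_append (u v : List α) : evalW σ (u ++ v) = evalW σ u * evalW σ v := by
  simp [evalW]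

lemma wlen_evalW_le (w : List α) : wlen σ (evalW σ w) ≤ w.length :=
  Nat.sInf_le ⟨w, rfl, rfl⟩

lemma exists_isGeodesicWord (hgen : Generates σ) (g : G) :
    ∃ w : List α, IsGeodesicWord σ w ∧ evalW σ w = g := by
  obtain ⟨w, hw⟩ := hgen g
  obtain ⟨v, hv, hlen⟩ :=
    Nat.sInf_mem (s := {n | ∃ v : List α, evalW σ v = g ∧ v.length = n}) ⟨w.length, w, hw, rfl⟩
  exact ⟨v, by rw [IsGeodesicWord, hv, hlen, wlen], hv⟩

lemma wlen_one : wlen σ (1 : G) = 0 :=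
  Nat.le_zero.mp (wlen_evalW_le σ [])

lemma wlen_mul_le (hgen : Generates σ) (g h : G) : wlen σ (g * h) ≤ wlen σ g + wlen σ h := by
  obtain ⟨u, hu, rfl⟩ := exists_isGeodesicWord σ hgen g
  obtain ⟨v, hv, rfl⟩ := exists_isGeodesicWord σ hgen h
  have huv := wlen_evalW_le σ (u ++ v)
  rw [IsGeodesicWord] at hu hv
  rw [evalW_append, List.length_append] at huv
  omega

lemma wlen_inv (hgen : Generates σ) (hsym : SymmetricGens σ) (g : G) :
    wlen σ g⁻¹ = wlen σ g := by
  choose ι hι using hsym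
  have inv_le (g : G) : wlen σ g⁻¹ ≤ wlen σ g := by
    obtain ⟨w, hw, rfl⟩ := exists_isGeodesicWord σ hgen g
    have : evalW σ (w.map ι).reverse = (evalW σ w)⁻¹ := by
      simp [evalW, List.prod_inv_reverse, Function.comp_def, hι]
    have hle := wlen_evalW_le σ (w.map ι).reverse
    rw [IsGeodesicWord] at hw
    simpa [this, hw] using hle
  exact le_antisymm (inv_le g) (by simpa using inv_le g⁻¹)

lemma IsGeodesicWord.of_isInfix (hgen : Generates σ) {u w : List α}
    (hw : IsGeodesicWord σ w) (huw : u <:+: w) : IsGeodesicWord σ u := by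
  obtain ⟨s, t, rfl⟩ := huw
  have hs := wlen_evalW_le σ s
  have hu := wlen_evalW_le σ u
  have ht := wlen_evalW_le σ t
  have hsut := wlen_mul_le σ hgen (evalW σ s * evalW σ u) (evalW σ t)
  have hsu := wlen_mul_le σ hgen (evalW σ s) (evalW σ u)
  simp only [IsGeodesicWord, evalW_append, List.length_append] at hw ⊢
  omega

end WordMetric

section LongGeodesics

variable {α G : Type*} [Group G] (σ : α → G)

lemma exists_isGeodesicWord_length_eq [Infinite G] [Finite α] (hgen : Generates σ) (N : ℕ) :
    ∃ w : List α, IsGeodesicWord σ w ∧ w.length = N := by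
  obtain ⟨g, hg⟩ : ∃ g : G, N ≤ wlen σ g := by
    by_contra! h
    refine Set.infinite_univ (α := G) (((List.finite_length_le α N).image (evalW σ)).subset ?_)
    intro g _
    obtain ⟨w, hw, rfl⟩ := exists_isGeodesicWord σ hgen g
    exact ⟨w, (hw ▸ (h _).le : w.length ≤ N), rfl⟩
  obtain ⟨w, hw, rfl⟩ := exists_isGeodesicWord σ hgen g
  refine ⟨w.take N, hw.of_isInfix σ hgen (w.take_prefix N).isInfix, ?_⟩
  rw [IsGeodesicWord] at hw
  simp only [List.length_take]
  omega

lemma exists_isGeodesicWord_append_of_prefix [Infinite G] [Finite α] (hgen : Generates σ)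
    {l L : ℕ} (hlL : l ≤ L) :
    ∃ u g : List α, IsGeodesicWord σ (u ++ g) ∧ g <+: u ∧ g.length = l ∧ L ≤ u.length := by
  classical
  set words := (List.finite_length_le α l).toFinset
  obtain ⟨W, hW, hWlen⟩ := exists_isGeodesicWord_length_eq σ hgen (words.card * L + l)
  obtain ⟨a, ha, b, hb, hab, hwindow⟩ := Finset.exists_ne_map_eq_of_card_lt_of_maps_to
    (s := Finset.range (words.card + 1)) (t := words) (f := fun j => (W.drop (j * L)).take l)
    (by simp) (fun j _ => by simp [words])
  wlog hlt : a < b generalizing a b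
  · exact this b hb a ha hab.symm hwindow.symm (by omega)
  rw [Finset.mem_range] at ha hb
  have hbL : b * L ≤ words.card * L := Nat.mul_le_mul_right L (by omega)
  have haL : a * L + L ≤ b * L := by simpa [add_mul] using Nat.mul_le_mul_right L hlt
  set V := W.drop (a * L)
  have hwindows : V.take (b * L - a * L) ++ V.take l = V.take (b * L - a * L + l) := by
    rw [List.take_add, List.drop_drop, Nat.add_sub_cancel' (by omega)]
    exact congrArg _ hwindow
  refine ⟨V.take (b * L - a * L), V.take l, hW.of_isInfix σ hgen ?_,
    List.take_prefix_take_left (by omega), by simp [V]; omega, by simp [V]; omega⟩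
  rw [hwindows]
  exact (V.take_prefix _).isInfix.trans (W.drop_suffix _).isInfix

end LongGeodesics


section GromovProduct

variable {α G : Type*} [Group G] (σ : α → G)

noncomputable def wdist (a b : G) : ℤ := gdist σ a b

lemma wdist_self (a : G) : wdist σ a a = 0 := by
  simp [wdist, gdist, wlen_one]

lemma wdist_one_left (a : G) : wdist σ 1 a = wlen σ a := by
  simp [wdist, gdist]

lemma wdist_mul_self (a b : G) : wdist σ a (a * b) = wlen σ b := by
  simp [wdist, gdist]

lemma wdist_mul_left (g a b : G) : wdist σ (g * a) (g * b) = wdist σ a b := by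
  simp [wdist, gdist, mul_assoc]

lemma wdist_comm (hgen : Generates σ) (hsym : SymmetricGens σ) (a b : G) :
    wdist σ a b = wdist σ b a := by
  rw [wdist, wdist, gdist, gdist, ← wlen_inv σ hgen hsym, mul_inv_rev, inv_inv]

lemma wdist_one_right (hgen : Generates σ) (hsym : SymmetricGens σ) (a : G) :
    wdist σ a 1 = wlen σ a := by
  rw [wdist_comm σ hgen hsym, wdist_one_left]

lemma wdist_triangle (hgen : Generates σ) (a b c : G) :
    wdist σ a c ≤ wdist σ a b + wdist σ b c := by
  have := wlen_mul_le σ hgen (a⁻¹ * b) (b⁻¹ * c)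
  rw [show a⁻¹ * b * (b⁻¹ * c) = a⁻¹ * c by group] at this
  simp only [wdist, gdist]
  exact_mod_cast this

def OnGeodesic (x y c : G) : Prop :=
  wdist σ x c + wdist σ c y = wdist σ x y

lemma OnGeodesic.symm (hgen : Generates σ) (hsym : SymmetricGens σ) {x y c : G}
    (h : OnGeodesic σ x y c) : OnGeodesic σ y x c := by
  unfold OnGeodesic at h ⊢
  linarith [wdist_comm σ hgen hsym x c, wdist_comm σ hgen hsym c y, wdist_comm σ hgen hsym x y]

lemma IsGeodesicWord.wdist_one_take (hgen : Generates σ) {w : List α}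
    (hw : IsGeodesicWord σ w) {i : ℕ} (hi : i ≤ w.length) :
    wdist σ 1 (evalW σ (w.take i)) = i := by
  rw [wdist_one_left, hw.of_isInfix σ hgen (w.take_prefix i).isInfix, List.length_take,
    min_eq_left hi]

lemma IsGeodesicWord.onGeodesic_take (hgen : Generates σ) {w : List α}
    (hw : IsGeodesicWord σ w) (β : G) (i : ℕ) :
    OnGeodesic σ β (β * evalW σ w) (β * evalW σ (w.take i)) := by
  have htake := hw.of_isInfix σ hgen (w.take_prefix i).isInfix
  have hdrop := hw.of_isInfix σ hgen (w.drop_suffix i).isInfix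
  have hsplit : evalW σ (w.take i) * evalW σ (w.drop i) = evalW σ w := by
    rw [← evalW_append, List.take_append_drop]
  rw [OnGeodesic, wdist_mul_left, ← hsplit, wdist_mul_self, wdist_mul_self, wdist_mul_self,
    hsplit, htake, hdrop, hw]
  simp only [List.length_take, List.length_drop]
  omega

lemma wdist_evalW_take_succ_le (w : List α) (i : ℕ) :
    wdist σ (evalW σ (w.take i)) (evalW σ (w.take (i + 1))) ≤ 1 := by
  rw [List.take_add, evalW_append, wdist_mul_self]
  have := (wlen_evalW_le σ ((w.drop i).take 1)).trans (List.length_take_le 1 _)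
  exact_mod_cast this

/-- Twice the Gromov product `(a | b)_p`, so that it stays integral. -/
noncomputable def gromovProd (p a b : G) : ℤ :=
  wdist σ p a + wdist σ p b - wdist σ a b

lemma gromovProd_mul_left (g p a b : G) :
    gromovProd σ (g * p) (g * a) (g * b) = gromovProd σ p a b := by
  simp only [gromovProd, wdist_mul_left]

lemma gromovProd_le_of_onGeodesic (hgen : Generates σ) (hsym : SymmetricGens σ) (p : G)
    {x y c : G} (hc : OnGeodesic σ x y c) : gromovProd σ p x y ≤ 2 * wdist σ p c := by
  have hx := wdist_triangle σ hgen p c x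
  have hy := wdist_triangle σ hgen p c y
  rw [wdist_comm σ hgen hsym c x] at hx
  unfold OnGeodesic at hc
  rw [gromovProd, ← hc]
  linarith

lemma add_wdist_le_of_onGeodesic (hgen : Generates σ) (hsym : SymmetricGens σ) {p x c : G}
    (hc : OnGeodesic σ p x c) (P : G) :
    wdist σ p P + wdist σ P x ≤ wdist σ p x + 2 * wdist σ P c := by
  have hp := wdist_triangle σ hgen p c P
  have hx := wdist_triangle σ hgen P c x
  rw [wdist_comm σ hgen hsym c P] at hp
  unfold OnGeodesic at hc
  rw [← hc]
  linarith

end GromovProduct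

namespace DeltaHyperbolic

variable {α G : Type*} [Group G] {σ : α → G} {δ : ℕ}

lemma exists_onGeodesic_near (hgen : Generates σ) (hhyp : DeltaHyperbolic σ δ) {v : List α}
    (hv : IsGeodesicWord σ v) (y : G) {i : ℕ} (hi : i ≤ v.length) :
    ∃ c, (OnGeodesic σ (evalW σ v) y c ∨ OnGeodesic σ y 1 c) ∧
      wdist σ (evalW σ (v.take i)) c ≤ δ := by
  obtain ⟨s, hs, hse⟩ := exists_isGeodesicWord σ hgen ((evalW σ v)⁻¹ * y)
  obtain ⟨t, ht, hte⟩ := exists_isGeodesicWord σ hgen y⁻¹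
  obtain ⟨j, ⟨-, hj⟩ | ⟨-, hj⟩⟩ := hhyp v s t hv hs ht (by rw [hse, hte]; group) i hi
  · refine ⟨_, Or.inl ?_, Nat.cast_le.mpr hj⟩
    simpa [hse] using hs.onGeodesic_take σ hgen (evalW σ v) j
  · refine ⟨_, Or.inr ?_, Nat.cast_le.mpr hj⟩
    simpa [hse, hte] using ht.onGeodesic_take σ hgen (evalW σ v * evalW σ s) j

lemma min_gromovProd_le (hgen : Generates σ) (hsym : SymmetricGens σ)
    (hhyp : DeltaHyperbolic σ δ) {v : List α} (hv : IsGeodesicWord σ v) (p y : G) {i : ℕ}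
    (hi : i ≤ v.length) :
    min (gromovProd σ p 1 y) (gromovProd σ p y (evalW σ v)) ≤
      2 * wdist σ p (evalW σ (v.take i)) + 2 * δ := by
  obtain ⟨c, hc | hc, hnear⟩ := hhyp.exists_onGeodesic_near hgen hv y hi
  · have := gromovProd_le_of_onGeodesic σ hgen hsym p (hc.symm σ hgen hsym)
    have := wdist_triangle σ hgen p (evalW σ (v.take i)) c
    linarith [min_le_right (gromovProd σ p 1 y) (gromovProd σ p y (evalW σ v))]
  · have := gromovProd_le_of_onGeodesic σ hgen hsym p (hc.symm σ hgen hsym)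
    have := wdist_triangle σ hgen p (evalW σ (v.take i)) c
    linarith [min_le_left (gromovProd σ p 1 y) (gromovProd σ p y (evalW σ v))]

lemma exists_two_mul_wdist_take_le (hgen : Generates σ) (hsym : SymmetricGens σ)
    (hhyp : DeltaHyperbolic σ δ) {v : List α} (hv : IsGeodesicWord σ v) (p : G) :
    ∃ i ≤ v.length,
      2 * wdist σ p (evalW σ (v.take i)) ≤ gromovProd σ p 1 (evalW σ v) + 4 * δ + 2 := by
  classical
  -- `k` is the last point of `v` that is `δ`-close to a geodesic from `p` to `1`; the next one
  -- is then `δ`-close to a geodesic from `evalW σ v` to `p`.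
  set Q : ℕ → Prop := fun i => ∃ c, OnGeodesic σ p 1 c ∧ wdist σ (evalW σ (v.take i)) c ≤ δ
  have hQ0 : Q 0 := ⟨1, by simp [OnGeodesic, wdist_self], by simp [wdist_self]⟩
  set k := Nat.findGreatest Q v.length
  have hkv : k ≤ v.length := Nat.findGreatest_le _
  obtain ⟨c, hc, hnear⟩ : Q k := Nat.findGreatest_spec (Nat.zero_le _) hQ0
  have hk := add_wdist_le_of_onGeodesic σ hgen hsym hc (evalW σ (v.take k))
  have hPk := hv.wdist_one_take σ hgen hkv
  have hPk_comm := wdist_comm σ hgen hsym (evalW σ (v.take k)) 1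
  refine ⟨k, hkv, ?_⟩
  rcases hkv.eq_or_lt with hk_eq | hk_lt
  · have hPz : evalW σ (v.take k) = evalW σ v := by rw [hk_eq, List.take_length]
    rw [hPz] at hnear hk hPk hPk_comm ⊢
    rw [gromovProd]
    linarith
  obtain ⟨c', hc' | hc', hnear'⟩ := hhyp.exists_onGeodesic_near hgen hv p hk_lt
  · have hk' := add_wdist_le_of_onGeodesic σ hgen hsym (hc'.symm σ hgen hsym)
      (evalW σ (v.take (k + 1)))
    have hPk' := hv.wdist_one_take σ hgen hk_lt
    have hon : OnGeodesic σ 1 (evalW σ v) (evalW σ (v.take (k + 1))) := by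
      simpa using hv.onGeodesic_take σ hgen 1 (k + 1)
    have hstep := wdist_evalW_take_succ_le σ v k
    have := wdist_triangle σ hgen p (evalW σ (v.take (k + 1))) (evalW σ (v.take k))
    have := wdist_comm σ hgen hsym (evalW σ (v.take k)) (evalW σ (v.take (k + 1)))
    unfold OnGeodesic at hon
    rw [gromovProd]
    push_cast at hPk'
    linarith
  · exact absurd ⟨c', hc', hnear'⟩ (Nat.findGreatest_is_greatest (Nat.lt_succ_self k) hk_lt)

lemma min_gromovProd_le_gromovProd_one (hgen : Generates σ) (hsym : SymmetricGens σ)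
    (hhyp : DeltaHyperbolic σ δ) (p y z : G) :
    min (gromovProd σ p 1 y) (gromovProd σ p y z) - (6 * δ + 2) ≤ gromovProd σ p 1 z := by
  obtain ⟨v, hv, rfl⟩ := exists_isGeodesicWord σ hgen z
  obtain ⟨i, hi, hnear⟩ := hhyp.exists_two_mul_wdist_take_le hgen hsym hv p
  linarith [hhyp.min_gromovProd_le hgen hsym hv p y hi]

/-- Gromov's four-point condition. -/
lemma min_gromovProd_le_gromovProd (hgen : Generates σ) (hsym : SymmetricGens σ)
    (hhyp : DeltaHyperbolic σ δ) (p x y z : G) :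
    min (gromovProd σ p x y) (gromovProd σ p y z) - (6 * δ + 2) ≤ gromovProd σ p x z := by
  have h := hhyp.min_gromovProd_le_gromovProd_one hgen hsym (x⁻¹ * p) (x⁻¹ * y) (x⁻¹ * z)
  rwa [← inv_mul_cancel x, gromovProd_mul_left, gromovProd_mul_left, gromovProd_mul_left] at h

lemma gromovProd_inv_self_le (hgen : Generates σ) (hsym : SymmetricGens σ)
    (hhyp : DeltaHyperbolic σ δ) {s g : G} (hsg : wlen σ (s * g) = wlen σ s + wlen σ g)
    (hgs : wlen σ (g⁻¹ * s) + wlen σ g = wlen σ s) (hg : 6 * δ + 2 < 2 * wlen σ g) :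
    gromovProd σ 1 s⁻¹ s ≤ 6 * δ + 2 := by
  have h := hhyp.min_gromovProd_le_gromovProd hgen hsym 1 s⁻¹ s g
  have h₁ : gromovProd σ 1 s⁻¹ g = 0 := by
    simp [gromovProd, wdist, gdist, wlen_inv σ hgen hsym, hsg]
  have h₂ : gromovProd σ 1 s g = 2 * wlen σ g := by
    simp only [gromovProd, wdist, gdist, inv_one, one_mul]
    rw [show s⁻¹ * g = (g⁻¹ * s)⁻¹ by group, wlen_inv σ hgen hsym]
    omega
  rw [h₁, h₂] at h
  omega

lemma gromovProd_inv_self_le_of_isGeodesicWord (hgen : Generates σ) (hsym : SymmetricGens σ)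
    (hhyp : DeltaHyperbolic σ δ) {u g : List α} (hug : IsGeodesicWord σ (u ++ g))
    (hgu : g <+: u) (hg : 6 * δ + 2 < 2 * g.length) :
    gromovProd σ 1 (evalW σ u)⁻¹ (evalW σ u) ≤ 6 * δ + 2 := by
  obtain ⟨r, rfl⟩ := hgu
  have hu := hug.of_isInfix σ hgen (List.prefix_append _ _).isInfix
  have hg' := hug.of_isInfix σ hgen
    ((List.prefix_append g r).trans (List.prefix_append _ g)).isInfix
  have hr := hug.of_isInfix σ hgen (List.infix_append g r g)
  refine hhyp.gromovProd_inv_self_le hgen hsym (g := evalW σ g) ?_ ?_ ?_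
  · rw [← evalW_append, hug, hu, hg', List.length_append]
  · rw [evalW_append, inv_mul_cancel_left, hr, hg', ← evalW_append, hu, List.length_append,
      add_comm]
  · rw [hg']
    exact hg

lemma wlen_pow_add_le_wlen_pow_succ (hgen : Generates σ) (hsym : SymmetricGens σ)
    (hhyp : DeltaHyperbolic σ δ) {s : G} (hs : gromovProd σ 1 s⁻¹ s ≤ 6 * δ + 2)
    (hlen : 2 * (6 * δ + 2) < wlen σ s) (j : ℕ) :
    (wlen σ (s ^ j) : ℤ) + wlen σ s - 2 * (6 * δ + 2) ≤ wlen σ (s ^ (j + 1)) := by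
  induction j with
  | zero =>
    simp only [pow_zero, wlen_one, zero_add, pow_one]
    omega
  | succ j ih =>
    -- By `ih`, the first product in the four-point condition is too large to be the minimum.
    have h :=
      hhyp.min_gromovProd_le_gromovProd hgen hsym (s ^ (j + 1)) (s ^ j) 1 (s ^ (j + 1 + 1))
    have hback : s ^ (j + 1) * s⁻¹ = s ^ j := by group
    have hfwd : s ^ (j + 1) * s = s ^ (j + 1 + 1) := by group
    have hpow :
        gromovProd σ (s ^ (j + 1)) (s ^ j) (s ^ (j + 1 + 1)) = gromovProd σ 1 s⁻¹ s := by
      rw [← gromovProd_mul_left σ (s ^ (j + 1)) 1, mul_one, hback, hfwd]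
    have h₁ : gromovProd σ (s ^ (j + 1)) (s ^ j) 1 =
        wlen σ s + wlen σ (s ^ (j + 1)) - wlen σ (s ^ j) := by
      rw [gromovProd, wdist_one_right σ hgen hsym, wdist_one_right σ hgen hsym, ← hback,
        wdist_mul_self, wlen_inv σ hgen hsym]
    have h₂ : gromovProd σ (s ^ (j + 1)) 1 (s ^ (j + 1 + 1)) =
        wlen σ (s ^ (j + 1)) + wlen σ s - wlen σ (s ^ (j + 1 + 1)) := by
      rw [gromovProd, wdist_one_right σ hgen hsym, wdist_one_left, ← hfwd, wdist_mul_self]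
    rw [hpow, h₁, h₂] at h
    omega

lemma not_isOfFinOrder (hgen : Generates σ) (hsym : SymmetricGens σ)
    (hhyp : DeltaHyperbolic σ δ) {s : G} (hs : gromovProd σ 1 s⁻¹ s ≤ 6 * δ + 2)
    (hlen : 2 * (6 * δ + 2) < wlen σ s) : ¬ IsOfFinOrder s := by
  have hgrowth (j : ℕ) : j ≤ wlen σ (s ^ j) := by
    induction j with
    | zero => exact Nat.zero_le _
    | succ j ih =>
      have := hhyp.wlen_pow_add_le_wlen_pow_succ hgen hsym hs hlen j
      omega
  rw [isOfFinOrder_iff_pow_eq_one]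
  rintro ⟨k, hk, hsk⟩
  have := hgrowth k
  rw [hsk, wlen_one] at this
  omega

end DeltaHyperbolic

/-- Every infinite hyperbolic group contains an element of infinite order. -/
theorem infinite_hyperbolic_has_infinite_order_element {α : Type*} {G : Type*}
    [Group G] [Infinite G] [Fintype α] (σ : α → G) (δ : ℕ)
    (hgen : Generates σ) (hsym : SymmetricGens σ) (hhyp : DeltaHyperbolic σ δ) :
    ∃ g : G, ¬ IsOfFinOrder g := by
  obtain ⟨u, g, hug, hgu, hg, hu⟩ := exists_isGeodesicWord_append_of_prefix σ hgen
    (l := 3 * δ + 2) (L := 2 * (6 * δ + 2) + 1) (by omega)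
  have hwlen : wlen σ (evalW σ u) = u.length :=
    hug.of_isInfix σ hgen (List.prefix_append u g).isInfix
  exact ⟨evalW σ u, hhyp.not_isOfFinOrder hgen hsym
    (hhyp.gromovProd_inv_self_le_of_isGeodesicWord hgen hsym hug hgu (by omega)) (by omega)⟩
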